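/- For every even integer n ≥ 4, in the presented group G_n = ⟨R₁, ..., R_{n-1} | braid relations, far commutation, R₁² = R₂ R₁² R₂⟩, the element R₁² R₃² R₅² ⋯ R_{n-1}² (the product of the squares of the odd-indexed generators) is central. -/

import Mathlib

/-! Conjugating the relation `R₁² = R₂R₁²R₂` by `RᵢRᵢ₊₁Rᵢ₊₂`, which sends `Rᵢ ↦ Rᵢ₊₁` and
`Rᵢ₊₁ ↦ Rᵢ₊₂`, propagates it to `Rᵢ² = Rᵢ₊₁Rᵢ²Rᵢ₊₁` for every `i`; conjugating by `RᵢRᵢ₊₁Rᵢ`,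
which swaps `Rᵢ` and `Rᵢ₊₁`, gives `Rᵢ₊₁² = RᵢRᵢ₊₁²Rᵢ` as well. So an even-indexed generator
`R_{2a}` satisfies `R_{2a} x R_{2a} = x` for both neighbouring factors `x = R_{2a-1}², R_{2a+1}²`
of `R₁²R₃²⋯R_{n-1}²` (both exist because `n` is even), i.e. `R_{2a} x = x R_{2a}⁻¹`, and hence
commutes with their product. All other factors commute with it by far commutativity, and every
odd-indexed generator commutes with every factor. -/

/-- The relators of the presentation
`⟨R₁, …, R_{n-1} | RᵢRᵢ₊₁Rᵢ = Rᵢ₊₁RᵢRᵢ₊₁ (1 ≤ i ≤ n-2); RᵢRⱼ = RⱼRᵢ (|i-j| ≥ 2);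
R₁² = R₂R₁²R₂⟩`, as elements of the free group on `n - 1` generators
(indexed by `Fin (n-1)`, the generator `Rᵢ` being `FreeGroup.of ⟨i-1, _⟩`). -/
def spinOctRels (n : ℕ) : Set (FreeGroup (Fin (n - 1))) :=
  { r | (∃ i j : Fin (n - 1), (j : ℕ) = (i : ℕ) + 1 ∧
          r = (FreeGroup.of i * FreeGroup.of j * FreeGroup.of i) *
              (FreeGroup.of j * FreeGroup.of i * FreeGroup.of j)⁻¹) ∨
        (∃ i j : Fin (n - 1), (i : ℕ) + 2 ≤ (j : ℕ) ∧
          r = (FreeGroup.of i * FreeGroup.of j) * (FreeGroup.of j * FreeGroup.of i)⁻¹) ∨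
        (∃ i j : Fin (n - 1), (i : ℕ) = 0 ∧ (j : ℕ) = 1 ∧
          r = (FreeGroup.of i) ^ 2 *
              (FreeGroup.of j * (FreeGroup.of i) ^ 2 * FreeGroup.of j)⁻¹) }

section Braid

variable {G : Type*} [Group G] {a b c x y : G}

theorem sq_eq_mul_sq_mul_of_conj {a' b' : G} (d : G) (ha : d * a * d⁻¹ = a')
    (hb : d * b * d⁻¹ = b') (h : a ^ 2 = b * a ^ 2 * b) : a' ^ 2 = b' * a' ^ 2 * b' := by
  simpa only [map_mul, map_pow, MulAut.conj_apply, ha, hb] using congrArg (MulAut.conj d) h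

theorem sq_eq_mul_sq_mul_of_braid_shift (hab : a * b * a = b * a * b)
    (hbc : b * c * b = c * b * c) (hac : Commute a c) (h : a ^ 2 = b * a ^ 2 * b) :
    b ^ 2 = c * b ^ 2 * c := by
  refine sq_eq_mul_sq_mul_of_conj (a * b * c) ?_ ?_ h <;> rw [mul_inv_eq_iff_eq_mul]
  · calc a * b * c * a = a * b * a * c := by rw [mul_assoc _ c, hac.symm.eq, ← mul_assoc]
      _ = b * (a * b * c) := by rw [hab]; simp only [mul_assoc]
  · calc a * b * c * b = a * (c * b * c) := by rw [← hbc]; simp only [mul_assoc]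
      _ = c * (a * b * c) := by simp only [← mul_assoc, hac.eq]

theorem sq_eq_mul_sq_mul_of_braid_swap (hab : a * b * a = b * a * b)
    (h : a ^ 2 = b * a ^ 2 * b) : b ^ 2 = a * b ^ 2 * a := by
  refine sq_eq_mul_sq_mul_of_conj (a * b * a) ?_ ?_ h <;> rw [mul_inv_eq_iff_eq_mul]
  · calc a * b * a * a = b * a * b * a := by rw [hab]
      _ = b * (a * b * a) := by simp only [mul_assoc]
  · calc a * b * a * b = a * (b * a * b) := by simp only [mul_assoc]
      _ = a * (a * b * a) := by rw [hab]

theorem commute_mul_of_mul_mul_self_eq (hx : b * x * b = x) (hy : b * y * b = y) :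
    Commute b (x * y) := by
  have hbx : b * x = x * b⁻¹ := eq_mul_inv_of_mul_eq hx
  have hby : b⁻¹ * y = y * b := by rw [inv_mul_eq_iff_eq_mul, ← mul_assoc, hy]
  calc b * (x * y) = x * (b⁻¹ * y) := by rw [← mul_assoc, hbx, mul_assoc]
    _ = x * y * b := by rw [hby, mul_assoc]

theorem commute_prod_range_of_commute_pair {f : ℕ → G} {k s : ℕ} (hks : k + 1 < s)
    (hf : ∀ j, j ≠ k → j ≠ k + 1 → Commute b (f j)) (hpair : Commute b (f k * f (k + 1))) :
    Commute b ((List.range s).map f).prod := by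
  obtain ⟨t, rfl⟩ : ∃ t, s = k + 2 + t := ⟨s - (k + 2), by omega⟩
  rw [List.range_add, List.range_succ, List.range_succ]
  simp only [List.map_append, List.prod_append, List.map_cons, List.map_nil, List.prod_cons,
    List.prod_nil, mul_one, mul_assoc]
  refine .mul_right (.list_prod_right _ _ ?_) (mul_assoc (f k) _ _ ▸ hpair.mul_right
    (.list_prod_right _ _ ?_))
  · simp only [List.mem_map, List.mem_range]
    rintro _ ⟨j, hj, rfl⟩
    exact hf j (by omega) (by omega)
  · simp only [List.mem_map, List.mem_range]
    rintro _ ⟨_, ⟨j, -, rfl⟩, rfl⟩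
    exact hf _ (by omega) (by omega)

end Braid

theorem PresentedGroup.mem_center_of_forall_commute_of {α : Type*} {rels : Set (FreeGroup α)}
    {z : PresentedGroup rels} (h : ∀ a, Commute (of a) z) : z ∈ Subgroup.center _ := by
  rw [← Subgroup.centralizer_univ, ← Subgroup.coe_top, ← closure_range_of,
    Subgroup.centralizer_closure]
  rintro _ ⟨a, rfl⟩
  exact (h a).eq

theorem List.filter_range_even (m : ℕ) :
    (List.range m).filter (fun k => k % 2 = 0) = (List.range ((m + 1) / 2)).map (2 * ·) := by
  induction m with
  | zero => rfl
  | succ m ih =>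
    rw [List.range_succ, List.filter_append, ih]
    rcases Nat.even_or_odd' m with ⟨j, rfl | rfl⟩
    · rw [show (2 * j + 1 + 1) / 2 = j + 1 by omega, show (2 * j + 1) / 2 = j by omega,
        List.range_succ, List.map_append]
      simp
    · rw [show (2 * j + 1 + 1 + 1) / 2 = (2 * j + 1 + 1) / 2 by omega]
      simp [Nat.add_mod]

theorem List.map_filter_finRange_even {α : Type*} (f : ℕ → α) (m : ℕ) :
    ((List.finRange m).filter (fun i : Fin m => decide ((i : ℕ) % 2 = 0))).map
        (fun i : Fin m => f i) =
      (List.range ((m + 1) / 2)).map (fun j => f (2 * j)) := by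
  have h := congrArg (List.map f) (List.filter_range_even m)
  rwa [← List.map_coe_finRange_eq_range, List.filter_map, List.map_map, List.map_map] at h

namespace SpinOct

open PresentedGroup

variable {n i j : ℕ}

/-- The generator `R_{i+1}` of `G_n`, extended by `1` to indices `i ≥ n - 1`. -/
def gen (n i : ℕ) : PresentedGroup (spinOctRels n) :=
  if h : i < n - 1 then of ⟨i, h⟩ else 1

theorem gen_of_lt (h : i < n - 1) : gen n i = of ⟨i, h⟩ := dif_pos h

theorem gen_val (i : Fin (n - 1)) : gen n i = of i := gen_of_lt i.isLt

theorem gen_braid (h : i + 1 < n - 1) :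
    gen n i * gen n (i + 1) * gen n i = gen n (i + 1) * gen n i * gen n (i + 1) := by
  rw [gen_of_lt (by omega), gen_of_lt h]
  exact mk_eq_mk_of_mul_inv_mem (Or.inl ⟨_, _, rfl, rfl⟩)

theorem commute_gen_of_add_two_le (h : i + 2 ≤ j) : Commute (gen n i) (gen n j) := by
  by_cases hj : j < n - 1
  · rw [gen_of_lt (by omega), gen_of_lt hj]
    exact mk_eq_mk_of_mul_inv_mem (Or.inr (Or.inl ⟨_, _, h, rfl⟩))
  · rw [show gen n j = 1 from dif_neg hj]
    exact .one_right _

theorem gen_zero_sq (h : 1 < n - 1) : gen n 0 ^ 2 = gen n 1 * gen n 0 ^ 2 * gen n 1 := by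
  rw [gen_of_lt (by omega), gen_of_lt h]
  exact mk_eq_mk_of_mul_inv_mem (Or.inr (Or.inr ⟨_, _, rfl, rfl, rfl⟩))

theorem gen_sq (h : i + 1 < n - 1) :
    gen n i ^ 2 = gen n (i + 1) * gen n i ^ 2 * gen n (i + 1) := by
  induction i with
  | zero => exact gen_zero_sq h
  | succ i ih =>
    exact sq_eq_mul_sq_mul_of_braid_shift (gen_braid (by omega)) (gen_braid h)
      (commute_gen_of_add_two_le le_rfl) (ih (by omega))

theorem gen_succ_sq (h : i + 1 < n - 1) :
    gen n (i + 1) ^ 2 = gen n i * gen n (i + 1) ^ 2 * gen n i :=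
  sq_eq_mul_sq_mul_of_braid_swap (gen_braid h) (gen_sq h)

theorem commute_gen_sq_of_even {a : ℕ} (hi : Even i) : Commute (gen n i) (gen n (2 * a) ^ 2) := by
  obtain ⟨b, rfl⟩ := hi
  rcases lt_trichotomy b a with hba | rfl | hab
  · exact (commute_gen_of_add_two_le (by omega)).pow_right 2
  · rw [two_mul]
    exact (Commute.refl _).pow_right 2
  · exact ((commute_gen_of_add_two_le (by omega)).pow_left 2).symm

theorem commute_gen_prod_sq {s k : ℕ} (hn : n = 2 * s) (hk : k < n - 1) :
    Commute (gen n k) ((List.range s).map fun j => gen n (2 * j) ^ 2).prod := by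
  rcases Nat.even_or_odd k with hk_even | ⟨a, rfl⟩
  · exact .list_prod_right _ _ fun _ hx => by
      obtain ⟨j, -, rfl⟩ := List.mem_map.mp hx
      exact commute_gen_sq_of_even hk_even
  · refine commute_prod_range_of_commute_pair (k := a) (by omega) (fun j hja hja' => ?_) ?_
    · rcases lt_or_gt_of_ne hja with hja | hja
      · exact ((commute_gen_of_add_two_le (by omega)).pow_left 2).symm
      · exact (commute_gen_of_add_two_le (by omega)).pow_right 2
    · refine commute_mul_of_mul_mul_self_eq (gen_sq (by omega)).symm ?_
      have h := (gen_succ_sq (i := 2 * a + 1) (n := n) (by omega)).symm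
      rwa [show 2 * a + 1 + 1 = 2 * (a + 1) by ring] at h

end SpinOct

open SpinOct in
theorem stmt_16_general (n : ℕ) (heven : Even n) :
    (((List.finRange (n - 1)).filter (fun i : Fin (n - 1) => decide ((i : ℕ) % 2 = 0))).map
        (fun i => (PresentedGroup.of (rels := spinOctRels n) i) ^ 2)).prod ∈
      Subgroup.center (PresentedGroup (spinOctRels n)) := by
  obtain ⟨s, hs⟩ := heven
  simp only [← gen_val]
  rw [List.map_filter_finRange_even (fun i => gen n i ^ 2), show (n - 1 + 1) / 2 = s by omega]
  refine PresentedGroup.mem_center_of_forall_commute_of fun k => ?_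
  rw [← gen_val]
  exact commute_gen_prod_sq (by omega) k.isLt

/-- For even `n`, the statement that the product `R₁²R₃²⋯R_{n-1}²` of the squares of
the odd-indexed generators (taken in increasing order of index; in our `Fin (n-1)`
indexing the paper's `R_{2m+1}` is the generator of index `2m`) is central. -/
theorem stmt_16 (n : ℕ) (hn : 4 ≤ n) (heven : Even n) :
    (((List.finRange (n - 1)).filter (fun i : Fin (n - 1) => decide ((i : ℕ) % 2 = 0))).map
        (fun i => (PresentedGroup.of (rels := spinOctRels n) i) ^ 2)).prod ∈
      Subgroup.center (PresentedGroup (spinOctRels n)) :=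
  stmt_16_general n heven
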